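/- For all integers c ≥ 1 and p ≥ 2, the graph H_{c,p} has exactly p^{c+1} good routes, exactly p of which are exceptional; hence H_{c,p} has exactly p^{c+1} − p good non-exceptional routes, and exactly c + p exceptional routes in total (the c minimal cycles together with the p monochromatic blue source-to-sink routes). -/

import Mathlib

namespace PaperDKK

/-- Edge colours for framings. -/
inductive Col : Type
  | red : Col
  | blue : Col
  deriving DecidableEq

variable {V E : Type*}

/-- The list of vertices visited by a walk. -/
def walkVerts (tl hd : E → V) : List E → List V
  | [] => []
  | e :: es => tl e :: (e :: es).map hd

/-- A walk: a nonempty list of consecutively composable edges. -/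
def IsWalk (tl hd : E → V) (w : List E) : Prop :=
  w ≠ [] ∧ List.Chain' (fun e f => hd e = tl f) w

/-- A source: a vertex that is the head of no edge. -/
def IsSource (tl hd : E → V) (v : V) : Prop := ∀ e : E, hd e ≠ v

/-- A sink: a vertex that is the tail of no edge. -/
def IsSink (tl hd : E → V) (v : V) : Prop := ∀ e : E, tl e ≠ v

/-- An internal vertex: neither a source nor a sink. -/
def IsInternal (tl hd : E → V) (v : V) : Prop :=
  ¬ IsSource tl hd v ∧ ¬ IsSink tl hd v

/-- A minimal directed cycle: a closed walk visiting no vertex twice. -/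
def IsMinCycle (tl hd : E → V) (w : List E) : Prop :=
  IsWalk tl hd w ∧
  (∀ e ∈ w.getLast?, ∀ f ∈ w.head?, hd e = tl f) ∧
  (w.map hd).Nodup

/-- A walk from a source to a sink. -/
def IsSrcSnkWalk (tl hd : E → V) (w : List E) : Prop :=
  IsWalk tl hd w ∧
  (∀ e ∈ w.head?, IsSource tl hd (tl e)) ∧
  (∀ e ∈ w.getLast?, IsSink tl hd (hd e))

/-- A route: a minimal directed cycle or a source-to-sink walk. -/
def IsRoute (tl hd : E → V) (w : List E) : Prop :=
  IsMinCycle tl hd w ∨ IsSrcSnkWalk tl hd w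

/-- A good route: a source-to-sink walk none of whose contiguous subwalks is a
minimal directed cycle. -/
def IsGoodRoute (tl hd : E → V) (w : List E) : Prop :=
  IsSrcSnkWalk tl hd w ∧ ∀ u : List E, u <:+: w → ¬ IsMinCycle tl hd u

/-- A monochromatic list of edges. -/
def Mono (col : E → Col) (w : List E) : Prop :=
  ∃ b : Col, ∀ e ∈ w, col e = b

/-- Cyclic ample framing: at every internal vertex there is exactly one red and
one blue incoming edge and exactly one red and one blue outgoing edge, and every
minimal directed cycle is monochromatic. -/
def CyclicAmpleFraming (tl hd : E → V) (col : E → Col) : Prop :=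
  (∀ v : V, IsInternal tl hd v →
    (∃! e : E, hd e = v ∧ col e = Col.red) ∧
    (∃! e : E, hd e = v ∧ col e = Col.blue) ∧
    (∃! e : E, tl e = v ∧ col e = Col.red) ∧
    (∃! e : E, tl e = v ∧ col e = Col.blue)) ∧
  (∀ w : List E, IsMinCycle tl hd w → Mono col w)

/-- Incompatibility of two source-to-sink walks: they admit decompositions
`P·S·Q` and `P′·S·Q′` along a common (possibly vertex-only) subwalk `S`, with
the last edge of `P` and the first edge of `Q′` blue while the first edge of
`Q` and the last edge of `P′` are red.  Here the `P`-part is `P ++ [p]` and the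
`Q`-part is `q :: Q`, so `p` is the last edge of the `P`-part and `q` the first
edge of the `Q`-part. -/
def Incompat (tl hd : E → V) (col : E → Col) (w w' : List E) : Prop :=
  IsSrcSnkWalk tl hd w ∧ IsSrcSnkWalk tl hd w' ∧
  ∃ (P S Q P' Q' : List E) (p q p' q' : E),
    ((w = P ++ p :: (S ++ q :: Q) ∧ w' = P' ++ p' :: (S ++ q' :: Q')) ∨
     (w' = P ++ p :: (S ++ q :: Q) ∧ w = P' ++ p' :: (S ++ q' :: Q'))) ∧
    hd p = hd p' ∧
    col p = Col.blue ∧ col q' = Col.blue ∧ col q = Col.red ∧ col p' = Col.red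

/-- A route is exceptional if it is compatible with every route. -/
def Exceptional (tl hd : E → V) (col : E → Col) (w : List E) : Prop :=
  IsRoute tl hd w ∧ ∀ w' : List E, IsRoute tl hd w' → ¬ Incompat tl hd col w w'

/-- Connectivity of the underlying undirected graph. -/
def Connected (tl hd : E → V) : Prop :=
  ∀ v w : V,
    Relation.ReflTransGen
      (fun x y => ∃ e : E, (tl e = x ∧ hd e = y) ∨ (tl e = y ∧ hd e = x)) v w

/-- Every source and every sink has degree one. -/
def DegreeOneEnds (tl hd : E → V) : Prop :=
  (∀ v : V, IsSource tl hd v → ∃! e : E, tl e = v) ∧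
  (∀ v : V, IsSink tl hd v → ∃! e : E, hd e = v)

/-- No idle edges: no edge between internal vertices is the unique outgoing edge
of its tail or the unique incoming edge of its head. -/
def NoIdleEdges (tl hd : E → V) : Prop :=
  ∀ e : E, IsInternal tl hd (tl e) → IsInternal tl hd (hd e) →
    (∃ f : E, f ≠ e ∧ tl f = tl e) ∧ (∃ f : E, f ≠ e ∧ hd f = hd e)

/-- The edge set of a minimal directed cycle (minimal cycles are identified up
to cyclic rotation, hence with their edge sets). -/
def IsCycleSet (tl hd : E → V) [DecidableEq E] (C : Finset E) : Prop :=
  ∃ w : List E, IsMinCycle tl hd w ∧ w.toFinset = C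

/-- The routes of the graph: minimal directed cycles (up to rotation, i.e. as
edge sets) together with good routes. -/
abbrev RoutesT (tl hd : E → V) [DecidableEq E] : Type _ :=
  {C : Finset E // IsCycleSet tl hd C} ⊕ {w : List E // IsGoodRoute tl hd w}

/-- The indicator flow of a route: how many times the route traverses each edge. -/
def rInd (tl hd : E → V) [DecidableEq E] : RoutesT tl hd → E → ℝ
  | Sum.inl C => fun e => if e ∈ C.1 then 1 else 0
  | Sum.inr w => fun e => (w.1.count e : ℝ)

/-- Compatibility of routes: minimal cycles are compatible with everything;
two good routes are compatible when they are not incompatible. -/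
def RCompat (tl hd : E → V) [DecidableEq E] (col : E → Col) :
    RoutesT tl hd → RoutesT tl hd → Prop
  | Sum.inr w, Sum.inr w' => ¬ Incompat tl hd col w.1 w'.1
  | _, _ => True

/-- A clique: a set of routes that are pairwise compatible and each compatible
with itself. -/
def RClique (tl hd : E → V) [DecidableEq E] (col : E → Col)
    (K : Set (RoutesT tl hd)) : Prop :=
  ∀ r ∈ K, ∀ r' ∈ K, RCompat tl hd col r r'

/-- Netflow of a real flow at a vertex. -/
def netflowR (tl hd : E → V) [Fintype E] [DecidableEq V] (f : E → ℝ) (v : V) : ℝ :=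
  (∑ e ∈ Finset.univ.filter (fun e => tl e = v), f e) -
  (∑ e ∈ Finset.univ.filter (fun e => hd e = v), f e)

/-- Vertices of the graph `H_{c,p}` of `c` nested `p`-cycles:
`(a,b)` with `0 ≤ a ≤ c+1` and `b ∈ {1,…,p}` (here 0-indexed). -/
abbrev HVtx (c p : ℕ) : Type := Fin (c + 2) × Fin p

/-- Edges of `H_{c,p}` : vertical edges `(a,b) → (a+1,b)` for `0 ≤ a ≤ c`,
and row-cycle edges `(a,b) → (a, b+1 mod p)` for `1 ≤ a ≤ c`. -/
abbrev HEdg (c p : ℕ) : Type := (Fin (c + 1) × Fin p) ⊕ (Fin c × Fin p)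

/-- Successor mod `p`. -/
def finNext {p : ℕ} (b : Fin p) : Fin p :=
  ⟨(b.1 + 1) % p, Nat.mod_lt _ (Nat.lt_of_le_of_lt (Nat.zero_le _) b.isLt)⟩

def Htl (c p : ℕ) : HEdg c p → HVtx c p
  | Sum.inl (a, b) => (Fin.castSucc a, b)
  | Sum.inr (a, b) => (Fin.castSucc (Fin.succ a), b)

def Hhd (c p : ℕ) : HEdg c p → HVtx c p
  | Sum.inl (a, b) => (Fin.succ a, b)
  | Sum.inr (a, b) => (Fin.castSucc (Fin.succ a), finNext b)

/-- The cyclic ample framing of `H_{c,p}` : row-cycle edges are red, all the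
remaining edges are blue. -/
def Hcol (c p : ℕ) : HEdg c p → Col
  | Sum.inl _ => Col.blue
  | Sum.inr _ => Col.red

section Aux

open List

variable {c p : ℕ}

lemma Htl_inl (u : Fin (c+1)) (b : Fin p) : Htl c p (Sum.inl (u,b)) = (u.castSucc, b) := rfl
lemma Htl_inr (a : Fin c) (b : Fin p) : Htl c p (Sum.inr (a,b)) = ((a.succ).castSucc, b) := rfl
lemma Hhd_inl (u : Fin (c+1)) (b : Fin p) : Hhd c p (Sum.inl (u,b)) = (u.succ, b) := rfl
lemma Hhd_inr (a : Fin c) (b : Fin p) :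
    Hhd c p (Sum.inr (a,b)) = ((a.succ).castSucc, finNext b) := rfl

lemma finNext_iterate_val (b : Fin p) : ∀ k, (finNext^[k] b).1 = (b.1 + k) % p
  | 0 => by simp [Nat.mod_eq_of_lt b.2]
  | k+1 => by
      rw [Function.iterate_succ_apply']
      show ((finNext^[k] b).1 + 1) % p = _
      rw [finNext_iterate_val b k, Nat.mod_add_mod, Nat.add_assoc]

lemma finNext_iterate_p (b : Fin p) : finNext^[p] b = b := by
  apply Fin.ext
  rw [finNext_iterate_val, Nat.add_mod_right, Nat.mod_eq_of_lt b.2]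

lemma finNext_iter_inj {b : Fin p} {i j : ℕ} (hi : i < p) (hj : j < p)
    (h : finNext^[i] b = finNext^[j] b) : i = j := by
  have h' : (b.1 + i) % p = (b.1 + j) % p := by
    rw [← finNext_iterate_val, ← finNext_iterate_val, h]
  have := Nat.ModEq.add_left_cancel' b.1 h'
  rwa [Nat.ModEq, Nat.mod_eq_of_lt hi, Nat.mod_eq_of_lt hj] at this

lemma finNext_dvd {b : Fin p} {n : ℕ} (h : finNext^[n] b = b) : p ∣ n := by
  have h' : (b.1 + n) % p = (b.1 + 0) % p := by
    rw [← finNext_iterate_val, h, Nat.add_zero, Nat.mod_eq_of_lt b.2]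
  have := Nat.ModEq.add_left_cancel' b.1 h'
  exact (Nat.modEq_zero_iff_dvd).1 this

lemma finNext_pred (x : Fin p) : ∃ y : Fin p, finNext y = x := by
  have hp0 : 0 < p := x.pos
  refine ⟨finNext^[p-1] x, ?_⟩
  have h2 : finNext^[p-1+1] x = x := by
    rw [show p-1+1 = p from by omega, finNext_iterate_p]
  rw [Function.iterate_succ_apply'] at h2
  exact h2

/-- The relation of consecutive edges in a walk. -/
def ER (c p : ℕ) (e f : HEdg c p) : Prop := Hhd c p e = Htl c p f

/-- `atRow v a b` : vertex `v` is in row `a` and column `b` (rows as naturals). -/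
def atRow (v : HVtx c p) (a : ℕ) (b : Fin p) : Prop := v.1.1 = a ∧ v.2 = b

lemma atRow_eq {v v' : HVtx c p} {a b} (h : atRow v a b) (h' : atRow v' a b) : v = v' := by
  obtain ⟨h1, h2⟩ := h; obtain ⟨h1', h2'⟩ := h'
  apply Prod.ext
  · exact Fin.ext (h1.trans h1'.symm)
  · exact h2.trans h2'.symm

/-- A run of `m` red edges in row `a+1` starting at column `b`. -/
def rr (a : Fin c) : Fin p → ℕ → List (HEdg c p)
  | _, 0 => []
  | b, m+1 => Sum.inr (a, b) :: rr a (finNext b) m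

lemma rr_eq_map (a : Fin c) : ∀ (m : ℕ) (b : Fin p),
    rr a b m = (List.range m).map (fun i => Sum.inr (a, finNext^[i] b))
  | 0, b => rfl
  | m+1, b => by
      show Sum.inr (a, b) :: rr a (finNext b) m = _
      rw [rr_eq_map a m (finNext b), List.range_succ_eq_map, List.map_cons, List.map_map]
      simp [Function.comp, Function.iterate_succ_apply]

lemma rr_append (a : Fin c) (b : Fin p) (s t : ℕ) :
    rr a b (s + t) = rr a b s ++ rr a (finNext^[s] b) t := by
  induction s generalizing b with
  | zero => simp [show rr a b 0 = ([] : List (HEdg c p)) from rfl]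
  | succ s ih =>
      have h1 : s + 1 + t = (s + t) + 1 := by omega
      rw [h1]
      show Sum.inr (a, b) :: rr a (finNext b) (s + t) = _
      rw [ih (finNext b)]
      show _ = Sum.inr (a, b) :: rr a (finNext b) s ++ _
      rw [Function.iterate_succ_apply]
      simp

lemma rr_ne_nil {a : Fin c} {b : Fin p} {m : ℕ} (hm : m ≠ 0) : rr a b m ≠ [] := by
  cases m with
  | zero => omega
  | succ m => simp [rr]

lemma rr_head {a : Fin c} {b : Fin p} {m : ℕ} :
    ∀ e ∈ (rr a b m).head?, e = Sum.inr (a, b) := by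
  cases m with
  | zero => simp [rr]
  | succ m => simp [rr]

lemma rr_tl_head {a : Fin c} {b : Fin p} {m : ℕ} :
    ∀ e ∈ (rr a b m).head?, atRow (Htl c p e) (a.1 + 1) b := by
  intro e he
  rw [rr_head e he, Htl_inr]
  exact ⟨rfl, rfl⟩

lemma rr_hd_getLast {a : Fin c} {m : ℕ} : ∀ {b : Fin p},
    ∀ e ∈ (rr a b m).getLast?, atRow (Hhd c p e) (a.1 + 1) (finNext^[m] b) := by
  induction m with
  | zero => simp [rr]
  | succ m ih =>
      intro b e he
      cases m with
      | zero =>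
          simp only [rr, List.getLast?_singleton, Option.mem_def, Option.some_inj] at he
          subst he
          exact ⟨rfl, rfl⟩
      | succ m' =>
          rw [show rr a b (m'+1+1) = Sum.inr (a,b) :: rr a (finNext b) (m'+1) from rfl,
            show rr a (finNext b) (m'+1) = Sum.inr (a, finNext b) :: rr a (finNext (finNext b)) m' from rfl,
            List.getLast?_cons_cons] at he
          have := ih e he
          rwa [← Function.iterate_succ_apply] at this

lemma rr_chain {a : Fin c} {m : ℕ} : ∀ {b : Fin p}, List.Chain' (ER c p) (rr a b m) := by
  induction m with
  | zero => intro b; simp [rr, List.Chain', List.isChain_nil]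
  | succ m ih =>
      intro b
      rw [show rr a b (m+1) = Sum.inr (a,b) :: rr a (finNext b) m from rfl, List.Chain', List.isChain_cons]
      refine ⟨?_, ih⟩
      intro y hy
      rw [rr_head y hy]
      rfl

lemma rr_mem {a : Fin c} {m : ℕ} {e : HEdg c p} : ∀ {b : Fin p}, e ∈ rr a b m →
    ∃ i < m, e = Sum.inr (a, finNext^[i] b) := by
  induction m with
  | zero => intro b h; simp [rr] at h
  | succ m ih =>
      intro b h
      rw [show rr a b (m+1) = Sum.inr (a,b) :: rr a (finNext b) m from rfl] at h
      rcases List.mem_cons.1 h with h | h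
      · exact ⟨0, by omega, h⟩
      · obtain ⟨i, hi, he⟩ := ih h
        exact ⟨i+1, by omega, by rwa [Function.iterate_succ_apply]⟩

lemma getLast?_cons_ne {α : Type*} {x : α} {l : List α} (h : l ≠ []) :
    (x :: l).getLast? = l.getLast? := by
  rw [show x :: l = [x] ++ l from rfl, List.getLast?_append_of_ne_nil _ h]

/-- The continuation of a route from row `a+1`, with red-run lengths `ks`. -/
def rest : ℕ → Fin p → List ℕ → List (HEdg c p)
  | _, _, [] => []
  | a, b, m :: ms =>
    if h : a < c then
      rr ⟨a, h⟩ b m ++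
        Sum.inl ((⟨a+1, by omega⟩ : Fin (c+1)), finNext^[m] b) :: rest (a+1) (finNext^[m] b) ms
    else []

lemma rest_nil (a : ℕ) (b : Fin p) : rest (c := c) a b [] = [] := rfl

lemma rest_cons {a : ℕ} (h : a < c) (b : Fin p) (m : ℕ) (ms : List ℕ) :
    rest a b (m :: ms) = rr ⟨a, h⟩ b m ++
      Sum.inl ((⟨a+1, by omega⟩ : Fin (c+1)), finNext^[m] b) :: rest (a+1) (finNext^[m] b) ms := by
  simp [rest, h]

lemma rest_ne_nil {a : ℕ} (h : a < c) (b : Fin p) (m : ℕ) (ms : List ℕ) :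
    rest (c := c) a b (m :: ms) ≠ [] := by
  rw [rest_cons h]
  simp

lemma rest_head {a : ℕ} (h : a < c) (b : Fin p) (m : ℕ) (ms : List ℕ) :
    ∀ e ∈ (rest a b (m :: ms)).head?, atRow (Htl c p e) (a+1) b := by
  intro e he
  rw [rest_cons h] at he
  cases m with
  | zero =>
      simp only [show rr (⟨a,h⟩ : Fin c) b 0 = [] from rfl, List.nil_append,
        List.head?_cons, Option.mem_def, Option.some_inj] at he
      subst he
      exact ⟨rfl, rfl⟩
  | succ m =>
      rw [show rr (⟨a,h⟩ : Fin c) b (m+1) = Sum.inr (⟨a,h⟩, b) :: rr ⟨a,h⟩ (finNext b) m from rfl,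
        List.cons_append, List.head?_cons] at he
      simp only [Option.mem_def, Option.some_inj] at he
      subst he
      exact ⟨rfl, rfl⟩

lemma rest_chain : ∀ (ks : List ℕ) (a : ℕ) (b : Fin p), a + ks.length ≤ c →
    List.Chain' (ER c p) (rest a b ks)
  | [], a, b, _ => by simp [rest_nil, List.Chain', List.isChain_nil]
  | m :: ms, a, b, hlen => by
      have h : a < c := by simp at hlen; omega
      rw [rest_cons h]
      rw [List.Chain', List.isChain_append]
      refine ⟨rr_chain, ?_, ?_⟩
      · rw [List.isChain_cons]
        refine ⟨?_, rest_chain ms (a+1) _ (by simp at hlen ⊢; omega)⟩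
        intro y hy
        cases ms with
        | nil => simp [rest_nil] at hy
        | cons m' ms' =>
            have h' : a + 1 < c := by simp at hlen; omega
            have h1 := rest_head h' (finNext^[m] b) m' ms' y hy
            show Hhd c p _ = Htl c p y
            exact atRow_eq (⟨rfl, rfl⟩ : atRow (Hhd c p
              (Sum.inl ((⟨a+1, by omega⟩ : Fin (c+1)), finNext^[m] b))) (a+1+1) (finNext^[m] b)) h1
      · intro x hx y hy
        simp only [List.head?_cons, Option.mem_def, Option.some_inj] at hy
        subst hy
        have h1 := rr_hd_getLast x hx
        show Hhd c p x = Htl c p _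
        exact atRow_eq h1 ⟨rfl, rfl⟩

lemma rest_getLast : ∀ (ks : List ℕ) (a : ℕ) (b : Fin p), ks ≠ [] → a + ks.length = c →
    ∀ e ∈ (rest a b ks).getLast?, (Hhd c p e).1.1 = c + 1
  | [], _, _, hne, _ => absurd rfl hne
  | [m], a, b, _, hlen => by
      have h : a < c := by simp at hlen; omega
      intro e he
      rw [rest_cons h, rest_nil, List.getLast?_append_of_ne_nil _ (by simp),
        List.getLast?_singleton] at he
      simp only [Option.mem_def, Option.some_inj] at he
      subst he
      simp only [Hhd_inl]
      show a + 1 + 1 = c + 1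
      simp at hlen; omega
  | m :: m' :: ms, a, b, _, hlen => by
      have h : a < c := by simp at hlen; omega
      intro e he
      rw [rest_cons h, List.getLast?_append_of_ne_nil _ (by simp),
        getLast?_cons_ne (rest_ne_nil (by simp at hlen; omega) _ _ _)] at he
      exact rest_getLast (m' :: ms) (a+1) _ (by simp) (by simp at hlen ⊢; omega) e he

lemma isSource_row0 {v : HVtx c p} (hv : v.1.1 = 0) : IsSource (Htl c p) (Hhd c p) v := by
  intro e he
  match e with
  | Sum.inl (u, b') =>
      have := congrArg (fun z => z.1.1) he
      simp [Hhd_inl] at this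
      omega
  | Sum.inr (a, b') =>
      have := congrArg (fun z => z.1.1) he
      simp [Hhd_inr] at this
      omega

lemma isSink_rowTop {v : HVtx c p} (hv : v.1.1 = c + 1) : IsSink (Htl c p) (Hhd c p) v := by
  intro e he
  match e with
  | Sum.inl (u, b') =>
      have := congrArg (fun z => z.1.1) he
      simp [Htl_inl] at this
      have := u.2
      omega
  | Sum.inr (a, b') =>
      have := congrArg (fun z => z.1.1) he
      simp [Htl_inr] at this
      have := a.2
      omega

lemma row_eq_zero_of_isSource {v : HVtx c p} (h : IsSource (Htl c p) (Hhd c p) v) :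
    v.1.1 = 0 := by
  by_contra hv
  have h2 : v.1.1 - 1 < c + 1 := by have := v.1.2; omega
  apply h (Sum.inl (⟨v.1.1 - 1, h2⟩, v.2))
  rw [Hhd_inl]
  have hval : (Fin.succ (⟨v.1.1 - 1, h2⟩ : Fin (c+1))).1 = v.1.1 := by
    show v.1.1 - 1 + 1 = v.1.1
    omega
  exact Prod.ext (Fin.ext hval) rfl

lemma no_edge_from_top (e : HEdg c p) : (Htl c p e).1.1 ≠ c + 1 := by
  match e with
  | Sum.inl (u, b') => simp [Htl_inl]; have := u.2; omega
  | Sum.inr (a, b') => simp [Htl_inr]; have := a.2; omega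

/-- The good route starting in column `b0` with red-run lengths `ks`. -/
def routeOf (b0 : Fin p) (ks : List ℕ) : List (HEdg c p) :=
  Sum.inl ((⟨0, Nat.succ_pos c⟩ : Fin (c+1)), b0) :: rest 0 b0 ks

lemma routeOf_walk (hc : 1 ≤ c) {b0 : Fin p} {ks : List ℕ} (hk : ks.length = c) :
    IsSrcSnkWalk (Htl c p) (Hhd c p) (routeOf b0 ks) := by
  obtain ⟨m, ms, rfl⟩ : ∃ m ms, ks = m :: ms := by
    cases ks with
    | nil => simp at hk; omega
    | cons m ms => exact ⟨m, ms, rfl⟩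
  have h0 : (0 : ℕ) < c := hc
  refine ⟨⟨by simp [routeOf], ?_⟩, ?_, ?_⟩
  · rw [routeOf, List.Chain', List.isChain_cons]
    refine ⟨?_, rest_chain _ 0 b0 (by omega)⟩
    intro y hy
    have h1 := rest_head h0 b0 m ms y hy
    exact atRow_eq (⟨rfl, rfl⟩ : atRow (Hhd c p
      (Sum.inl ((⟨0, Nat.succ_pos c⟩ : Fin (c+1)), b0))) 1 b0) h1
  · intro e he
    simp only [routeOf, List.head?_cons, Option.mem_def, Option.some_inj] at he
    subst he
    exact isSource_row0 rfl
  · intro e he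
    rw [routeOf, getLast?_cons_ne (rest_ne_nil h0 b0 m ms)] at he
    exact isSink_rowTop (rest_getLast (m :: ms) 0 b0 (by simp) (by simpa using hk) e he)

lemma row_eq_top_of_isSink {v : HVtx c p} (h : IsSink (Htl c p) (Hhd c p) v) :
    v.1.1 = c + 1 := by
  by_contra hv
  have h2 : v.1.1 < c + 1 := by have := v.1.2; omega
  apply h (Sum.inl (⟨v.1.1, h2⟩, v.2))
  rw [Htl_inl]
  exact Prod.ext (Fin.ext rfl) rfl

lemma edge_cases {e : HEdg c p} {a : ℕ} {b : Fin p} (ha : a < c)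
    (h : atRow (Htl c p e) (a+1) b) :
    e = Sum.inr ((⟨a, ha⟩ : Fin c), b) ∨ e = Sum.inl ((⟨a+1, by omega⟩ : Fin (c+1)), b) := by
  obtain ⟨h1, h2⟩ := h
  match e with
  | Sum.inl (u, b') =>
      right
      simp only [Htl_inl] at h1 h2
      have : u = (⟨a+1, by omega⟩ : Fin (c+1)) := Fin.ext h1
      rw [this, h2]
  | Sum.inr (a', b') =>
      left
      simp only [Htl_inr] at h1 h2
      have hv : a'.1 = a := by
        have : a'.1 + 1 = a + 1 := h1
        omega
      have : a' = (⟨a, ha⟩ : Fin c) := Fin.ext hv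
      rw [this, h2]

lemma dec : ∀ (n : ℕ) (w : List (HEdg c p)), w.length ≤ n →
    List.Chain' (ER c p) w →
    ∀ (a : ℕ) (b : Fin p), a ≤ c →
    (w = [] → a = c) →
    (∀ e ∈ w.head?, atRow (Htl c p e) (a+1) b) →
    (∀ e ∈ w.getLast?, (Hhd c p e).1.1 = c+1) →
    ∃ ks : List ℕ, ks.length = c - a ∧ w = rest a b ks := by
  intro n
  induction n with
  | zero =>
      intro w hlen _ a b _ hnil _ _
      have hw : w = [] := List.length_eq_zero_iff.1 (by omega)
      exact ⟨[], by simp [hnil hw], by rw [hw, rest_nil]⟩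
  | succ n ih =>
      intro w hlen hch a b hac hnil hhead hlast
      cases w with
      | nil => exact ⟨[], by simp [hnil rfl], by rw [rest_nil]⟩
      | cons e t =>
          rcases Nat.lt_or_ge a c with hlt | hge
          · have hhe : atRow (Htl c p e) (a+1) b := hhead e (by simp)
            have hch2 : List.Chain' (ER c p) t := (List.isChain_cons.1 hch).2
            have hlink : ∀ f ∈ t.head?, ER c p e f := (List.isChain_cons.1 hch).1
            rcases edge_cases hlt hhe with he | he
            · -- red edge
              subst he
              have hh2 : ∀ f ∈ t.head?, atRow (Htl c p f) (a+1) (finNext b) := by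
                intro f hf
                have := hlink f hf
                rw [← this]
                exact ⟨rfl, rfl⟩
              have hn2 : t = [] → a = c := by
                intro ht
                subst ht
                have := hlast (Sum.inr ((⟨a, hlt⟩ : Fin c), b)) (by simp)
                simp only [Hhd_inr] at this
                have : a + 1 = c + 1 := this
                omega
              have hl2 : ∀ f ∈ t.getLast?, (Hhd c p f).1.1 = c+1 := by
                intro f hf
                cases t with
                | nil => simp at hf
                | cons x s =>
                    apply hlast
                    rw [getLast?_cons_ne (by simp)]
                    exact hf
              obtain ⟨ks₂, hkl, hkr⟩ := ih t (by simp at hlen; omega) hch2 a (finNext b)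
                hac hn2 hh2 hl2
              obtain ⟨m, ms, rfl⟩ : ∃ m ms, ks₂ = m :: ms := by
                cases ks₂ with
                | nil => simp at hkl; omega
                | cons m ms => exact ⟨m, ms, rfl⟩
              refine ⟨(m+1) :: ms, by simp at hkl ⊢; omega, ?_⟩
              rw [hkr, rest_cons hlt, rest_cons hlt]
              show Sum.inr (⟨a, hlt⟩, b) :: (rr ⟨a, hlt⟩ (finNext b) m ++ _) = _
              rw [show rr (⟨a, hlt⟩ : Fin c) b (m+1)
                    = Sum.inr (⟨a, hlt⟩, b) :: rr ⟨a, hlt⟩ (finNext b) m from rfl,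
                List.cons_append]
              rw [Function.iterate_succ_apply]
            · -- blue edge
              subst he
              have hh2 : ∀ f ∈ t.head?, atRow (Htl c p f) (a+1+1) b := by
                intro f hf
                have := hlink f hf
                rw [← this]
                exact ⟨rfl, rfl⟩
              have hn2 : t = [] → a + 1 = c := by
                intro ht
                subst ht
                have := hlast (Sum.inl ((⟨a+1, by omega⟩ : Fin (c+1)), b)) (by simp)
                simp only [Hhd_inl] at this
                have h9 : a + 1 + 1 = c + 1 := this
                omega
              have hl2 : ∀ f ∈ t.getLast?, (Hhd c p f).1.1 = c+1 := by
                intro f hf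
                cases t with
                | nil => simp at hf
                | cons x s =>
                    apply hlast
                    rw [getLast?_cons_ne (by simp)]
                    exact hf
              obtain ⟨ks₂, hkl, hkr⟩ := ih t (by simp at hlen; omega) hch2 (a+1) b
                (by omega) hn2 hh2 hl2
              refine ⟨0 :: ks₂, by simp; omega, ?_⟩
              rw [hkr, rest_cons hlt]
              rfl
          · -- a = c : no outgoing edges
            exfalso
            have := hhead e (by simp)
            have h9 : (Htl c p e).1.1 = c + 1 := by rw [this.1]; omega
            exact no_edge_from_top e h9

lemma srcsnk_decode (hc : 1 ≤ c) {w : List (HEdg c p)}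
    (hw : IsSrcSnkWalk (Htl c p) (Hhd c p) w) :
    ∃ (b0 : Fin p) (ks : List ℕ), ks.length = c ∧ w = routeOf b0 ks := by
  obtain ⟨⟨hne, hch⟩, hsrc, hsnk⟩ := hw
  obtain ⟨e, t, rfl⟩ := List.exists_cons_of_ne_nil hne
  have hs0 : (Htl c p e).1.1 = 0 := row_eq_zero_of_isSource (hsrc e (by simp))
  obtain ⟨b0, he⟩ : ∃ b0 : Fin p, e = Sum.inl ((⟨0, Nat.succ_pos c⟩ : Fin (c+1)), b0) := by
    match e with
    | Sum.inl (u, b') =>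
        refine ⟨b', ?_⟩
        simp only [Htl_inl] at hs0
        rw [show u = (⟨0, Nat.succ_pos c⟩ : Fin (c+1)) from Fin.ext hs0]
    | Sum.inr (a', b') =>
        exfalso
        simp only [Htl_inr] at hs0
        exact absurd hs0 (by show ¬ (a'.1 + 1 = 0); omega)
  subst he
  have ht0 : t = [] → (0 : ℕ) = c := by
    intro ht
    subst ht
    have := row_eq_top_of_isSink (hsnk (Sum.inl ((⟨0, Nat.succ_pos c⟩ : Fin (c+1)), b0)) (by simp))
    simp only [Hhd_inl] at this
    have h9 : (0 : ℕ) + 1 = c + 1 := this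
    omega
  have hh : ∀ f ∈ t.head?, atRow (Htl c p f) (0+1) b0 := by
    intro f hf
    have := (List.isChain_cons.1 hch).1 f hf
    rw [← this]
    exact ⟨rfl, rfl⟩
  have hl : ∀ f ∈ t.getLast?, (Hhd c p f).1.1 = c+1 := by
    intro f hf
    cases t with
    | nil => simp at hf
    | cons x s =>
        apply row_eq_top_of_isSink
        apply hsnk
        rw [getLast?_cons_ne (by simp)]
        exact hf
  obtain ⟨ks, hkl, hkr⟩ := dec t.length t le_rfl (List.isChain_cons.1 hch).2 0 b0
    (by omega) ht0 hh hl
  exact ⟨b0, ks, by omega, by rw [routeOf, hkr]⟩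

lemma tl_le_hd (e : HEdg c p) : (Htl c p e).1.1 ≤ (Hhd c p e).1.1 := by
  match e with
  | Sum.inl (u, b') => exact Nat.le_succ _
  | Sum.inr (a, b') => exact le_rfl

lemma inr_of_row_eq {e : HEdg c p} (h : (Htl c p e).1.1 = (Hhd c p e).1.1) :
    ∃ ab, e = Sum.inr ab := by
  match e with
  | Sum.inl (u, b') =>
      exfalso
      simp only [Htl_inl, Hhd_inl] at h
      have : u.1 = u.1 + 1 := h
      omega
  | Sum.inr ab => exact ⟨ab, rfl⟩

lemma finNext_iter_dvd_sub {x : Fin p} {i j : ℕ} (hij : i ≤ j)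
    (h : finNext^[i] x = finNext^[j] x) : p ∣ j - i := by
  have h2 : finNext^[j - i] (finNext^[i] x) = finNext^[i] x := by
    rw [← Function.iterate_add_apply, show j - i + i = j from by omega, ← h]
  exact finNext_dvd h2

lemma all_inr_chain : ∀ (w : List (HEdg c p)), List.Chain' (ER c p) w →
    (∀ e ∈ w, ∃ ab, e = Sum.inr ab) →
    ∀ (a : Fin c) (b : Fin p), w.head? = some (Sum.inr (a, b)) → w = rr a b w.length
  | [], _, _, _, _, h => by simp at h
  | [x], _, _, a, b, h => by
      simp only [List.head?_cons, Option.some_inj] at h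
      subst h
      rfl
  | x :: y :: t, hch, hall, a, b, h => by
      simp only [List.head?_cons, Option.some_inj] at h
      subst h
      obtain ⟨⟨a2, b2⟩, hy⟩ := hall y (by simp)
      have hER : ER c p (Sum.inr (a, b)) y := (List.isChain_cons_cons.1 hch).1
      rw [hy] at hER
      have h1 : a2 = a := by
        have h3 := congrArg (fun v : HVtx c p => v.1.1) hER
        have h3' : a.1 + 1 = a2.1 + 1 := h3
        exact Fin.ext (by omega)
      have h2 : b2 = finNext b := (congrArg Prod.snd hER).symm
      rw [h1, h2] at hy
      have hrec := all_inr_chain (y :: t) (List.isChain_cons_cons.1 hch).2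
        (fun e he => hall e (List.mem_cons_of_mem _ he)) a (finNext b) (by rw [hy]; rfl)
      show Sum.inr (a, b) :: (y :: t) = Sum.inr (a, b) :: rr a (finNext b) (y :: t).length
      rw [← hrec]

lemma mincycle_struct (hp : 2 ≤ p) {w : List (HEdg c p)}
    (h : IsMinCycle (Htl c p) (Hhd c p) w) : ∃ (a : Fin c) (b : Fin p), w = rr a b p := by
  obtain ⟨⟨hne, hch⟩, hcl, hnd⟩ := h
  -- the transitive relation of weakly increasing rows
  set S : HEdg c p → HEdg c p → Prop := fun e f => (Hhd c p e).1.1 ≤ (Htl c p f).1.1 with hS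
  haveI : IsTrans (HEdg c p) S :=
    ⟨fun e f g h1 h2 => le_trans h1 (le_trans (tl_le_hd f) h2)⟩
  have hchS : List.Chain' S w := List.IsChain.imp
    (fun e f hef => by show (Hhd c p e).1.1 ≤ (Htl c p f).1.1; rw [hef]) hch
  have hpw : w.Pairwise S := List.isChain_iff_pairwise.1 hchS
  obtain ⟨f, t, rfl⟩ := List.exists_cons_of_ne_nil hne
  rcases List.eq_nil_or_concat (f :: t) with hcon | ⟨init, L, hcon⟩
  · simp at hcon
  rw [List.concat_eq_append] at hcon
  -- closedness
  have hclose : (Hhd c p L).1.1 = (Htl c p f).1.1 := by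
    rw [hcl L (by rw [hcon, List.getLast?_concat]; rfl) f (by simp)]
  have hbd1 : ∀ g ∈ f :: t, (Htl c p f).1.1 ≤ (Htl c p g).1.1 := by
    intro g hg
    rcases List.mem_cons.1 hg with rfl | hg
    · exact le_rfl
    · exact le_trans (tl_le_hd f) ((List.pairwise_cons.1 hpw).1 g hg)
  have hbd2 : ∀ g ∈ f :: t, (Hhd c p g).1.1 ≤ (Hhd c p L).1.1 := by
    intro g hg
    rw [hcon] at hg hpw
    rcases List.mem_append.1 hg with hg | hg
    · have := (List.pairwise_append.1 hpw).2.2 g hg L (by simp)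
      exact le_trans this (tl_le_hd L)
    · simp only [List.mem_singleton] at hg
      subst hg
      exact le_rfl
  have hall : ∀ g ∈ f :: t, ∃ ab, g = Sum.inr ab := by
    intro g hg
    have e1 := hbd1 g hg
    have e2 := hbd2 g hg
    have e3 := tl_le_hd g
    exact inr_of_row_eq (by omega)
  -- hence the walk is a red run
  obtain ⟨⟨a, b⟩, hf⟩ := hall f (by simp)
  subst hf
  have hrun := all_inr_chain (Sum.inr (a, b) :: t) hch hall a b (by simp)
  set n := (Sum.inr (a, b) :: t).length with hn
  have hnpos : n ≠ 0 := by simp [hn]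
  -- closedness forces p ∣ n
  have hcyc : finNext^[n] b = b := by
    have hL := rr_hd_getLast (a := a) (b := b) (m := n) L (by rw [← hrun, hcon, List.getLast?_concat]; rfl)
    have hhead : Hhd c p L = Htl c p (Sum.inr (a, b)) := hcl L (by rw [hcon, List.getLast?_concat]; rfl)
      (Sum.inr (a, b)) (by simp)
    have := hL.2
    rw [hhead, Htl_inr] at this
    exact this.symm
  have hdvd : p ∣ n := finNext_dvd hcyc
  -- nodup forces n ≤ p
  have hle : n ≤ p := by
    by_contra hgt
    have hmap : (Sum.inr (a, b) :: t).map (Hhd c p)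
        = (List.range n).map (fun i => Hhd c p (Sum.inr (a, finNext^[i] b))) := by
      rw [hrun, rr_eq_map, List.map_map]
      rfl
    rw [hmap] at hnd
    have heq : Hhd c p (Sum.inr (a, finNext^[0] b)) = Hhd c p (Sum.inr (a, finNext^[p] b)) := by
      rw [finNext_iterate_p]
      rfl
    have := List.inj_on_of_nodup_map hnd (by simp; omega : (0:ℕ) ∈ List.range n)
      (by simp; omega : p ∈ List.range n) heq
    omega
  have hnp : n = p := Nat.le_antisymm hle (Nat.le_of_dvd (by omega) hdvd)
  exact ⟨a, b, by rw [hrun, hnp]⟩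

lemma rr_isMinCycle (hp : 2 ≤ p) (a : Fin c) (b : Fin p) :
    IsMinCycle (Htl c p) (Hhd c p) (rr a b p) := by
  refine ⟨⟨rr_ne_nil (by omega), rr_chain⟩, ?_, ?_⟩
  · intro e he f hf
    have h1 := rr_hd_getLast e he
    rw [finNext_iterate_p] at h1
    exact atRow_eq h1 (rr_tl_head f hf)
  · rw [rr_eq_map, List.map_map]
    apply List.Nodup.map_on ?_ List.nodup_range
    intro x hx y hy hxy
    simp only [List.mem_range] at hx hy
    simp only [Function.comp_apply, Hhd_inr, Prod.mk.injEq, true_and] at hxy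
    have h' : finNext^[x] (finNext b) = finNext^[y] (finNext b) := by
      rw [← Function.iterate_succ_apply, ← Function.iterate_succ_apply,
        Function.iterate_succ_apply', Function.iterate_succ_apply']
      exact hxy
    exact finNext_iter_inj hx hy h'

/-- Whether an edge is a red edge of row `a+1`. -/
def isRow (a : Fin c) : HEdg c p → Bool
  | Sum.inr (a', _) => a' = a
  | Sum.inl _ => false

lemma countP_rr (a a' : Fin c) : ∀ (m : ℕ) (b : Fin p),
    (rr a' b m).countP (isRow a) = if a' = a then m else 0
  | 0, b => by simp [rr]
  | m+1, b => by
      rw [show rr a' b (m+1) = Sum.inr (a', b) :: rr a' (finNext b) m from rfl,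
        List.countP_cons, countP_rr a a' m (finNext b)]
      by_cases h : a' = a <;> simp [isRow, h]

lemma rest_cons_neg {a0 : ℕ} (h : ¬ a0 < c) (b : Fin p) (m : ℕ) (ms : List ℕ) :
    rest (c := c) a0 b (m :: ms) = [] := by
  simp [rest, h]

lemma countP_rest_zero : ∀ (ks : List ℕ) (a0 : ℕ) (b : Fin p) (a : Fin c), a.1 < a0 →
    (rest a0 b ks).countP (isRow a) = 0
  | [], _, _, _, _ => by simp [rest_nil]
  | m :: ms, a0, b, a, ha => by
      by_cases h : a0 < c
      · rw [rest_cons h, List.countP_append, List.countP_cons, countP_rr,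
          countP_rest_zero ms (a0+1) _ a (by omega)]
        have : ¬ ((⟨a0, h⟩ : Fin c) = a) := by
          intro he
          rw [← he] at ha
          simp at ha
        simp [this, isRow]
      · simp [rest_cons_neg h]

lemma countP_rest_lt (hp0 : 0 < p) : ∀ (ks : List ℕ) (a0 : ℕ) (b : Fin p) (a : Fin c),
    (∀ m ∈ ks, m < p) → (rest a0 b ks).countP (isRow a) < p
  | [], _, _, _, _ => by simp [rest_nil]; omega
  | m :: ms, a0, b, a, hlt => by
      by_cases h : a0 < c
      · rw [rest_cons h, List.countP_append, List.countP_cons, countP_rr]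
        by_cases he : (⟨a0, h⟩ : Fin c) = a
        · rw [countP_rest_zero ms (a0+1) _ a (by rw [← he]; show a0 < a0 + 1; omega)]
          have : m < p := hlt m (by simp)
          simp [isRow, he, this]
        · have := countP_rest_lt hp0 ms (a0+1) (finNext^[m] b) a (fun x hx => hlt x (by simp [hx]))
          simp [isRow, he]
          omega
      · simp [rest_cons_neg h]; omega

lemma mincycle_countP {u : List (HEdg c p)} (hp : 2 ≤ p)
    (hu : IsMinCycle (Htl c p) (Hhd c p) u) : ∃ a : Fin c, u.countP (isRow a) = p := by
  obtain ⟨a, b, rfl⟩ := mincycle_struct hp hu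
  exact ⟨a, by rw [countP_rr, if_pos rfl]⟩

lemma routeOf_good (hc : 1 ≤ c) (hp : 2 ≤ p) {b0 : Fin p} {ks : List ℕ}
    (hk : ks.length = c) (hlt : ∀ m ∈ ks, m < p) :
    IsGoodRoute (Htl c p) (Hhd c p) (routeOf b0 ks) := by
  refine ⟨routeOf_walk hc hk, ?_⟩
  intro u hinf hmc
  obtain ⟨a, hcount⟩ := mincycle_countP hp hmc
  have h1 : u.countP (isRow a) ≤ (routeOf b0 ks).countP (isRow a) :=
    hinf.sublist.countP_le
  rw [hcount, routeOf, List.countP_cons] at h1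
  have h2 := countP_rest_lt (by omega) ks 0 b0 a hlt
  simp [isRow] at h1
  omega

lemma rest_suffix_step {a0 : ℕ} (h : a0 < c) (b : Fin p) (m : ℕ) (ms : List ℕ) :
    rest (c := c) (a0+1) (finNext^[m] b) ms <:+ rest (c := c) a0 b (m :: ms) := by
  rw [rest_cons h]
  exact ⟨rr ⟨a0, h⟩ b m ++ [Sum.inl ((⟨a0+1, by omega⟩ : Fin (c+1)), finNext^[m] b)], by simp⟩

lemma exists_cycle_infix (hp : 2 ≤ p) : ∀ (ks : List ℕ) (a0 : ℕ) (b : Fin p),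
    (∃ m ∈ ks, p ≤ m) → a0 + ks.length ≤ c →
    ∃ u, IsMinCycle (Htl c p) (Hhd c p) u ∧ u <:+: rest a0 b ks
  | [], _, _, hm, _ => by simp at hm
  | m :: ms, a0, b, hm, hlen => by
      have h : a0 < c := by simp at hlen; omega
      by_cases hpm : p ≤ m
      · refine ⟨rr ⟨a0, h⟩ b p, rr_isMinCycle hp _ _, ?_⟩
        have hsplit : rr (⟨a0, h⟩ : Fin c) b m
            = rr ⟨a0, h⟩ b p ++ rr ⟨a0, h⟩ (finNext^[p] b) (m - p) := by
          conv_lhs => rw [show m = p + (m - p) from by omega]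
          exact rr_append _ _ _ _
        apply List.IsPrefix.isInfix
        rw [rest_cons h, hsplit, List.append_assoc]
        exact List.prefix_append _ _
      · obtain ⟨m', hm', hpm'⟩ := hm
        have hm'' : m' ∈ ms := by
          rcases List.mem_cons.1 hm' with rfl | h2
          · omega
          · exact h2
        obtain ⟨u, hu, huinf⟩ := exists_cycle_infix hp ms (a0+1) (finNext^[m] b)
          ⟨m', hm'', hpm'⟩ (by simp at hlen ⊢; omega)
        exact ⟨u, hu, huinf.trans (rest_suffix_step h b m ms).isInfix⟩

lemma good_decode (hc : 1 ≤ c) (hp : 2 ≤ p) {w : List (HEdg c p)}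
    (hw : IsGoodRoute (Htl c p) (Hhd c p) w) :
    ∃ (b0 : Fin p) (ks : List ℕ), ks.length = c ∧ (∀ m ∈ ks, m < p) ∧ w = routeOf b0 ks := by
  obtain ⟨b0, ks, hkl, hkr⟩ := srcsnk_decode hc hw.1
  refine ⟨b0, ks, hkl, ?_, hkr⟩
  by_contra hno
  push_neg at hno
  obtain ⟨m, hm, hpm⟩ := hno
  obtain ⟨u, hu, huinf⟩ := exists_cycle_infix hp ks 0 b0 ⟨m, hm, hpm⟩
    (show (0:ℕ) + ks.length ≤ c by omega)
  apply hw.2 u ?_ hu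
  apply huinf.trans
  rw [hkr, routeOf]
  exact (List.suffix_cons _ _).isInfix

lemma mem_rest_blue : ∀ (ks : List ℕ) (a0 : ℕ) (b : Fin p), (∀ m ∈ ks, m = 0) →
    ∀ e ∈ rest a0 b ks, Hcol c p e = Col.blue
  | [], _, _, _, e, he => by simp [rest_nil] at he
  | m :: ms, a0, b, hz, e, he => by
      by_cases h : a0 < c
      · rw [rest_cons h, hz m (by simp)] at he
        rw [show rr (⟨a0, h⟩ : Fin c) b 0 = [] from rfl, List.nil_append] at he
        rcases List.mem_cons.1 he with rfl | he2
        · rfl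
        · exact mem_rest_blue ms (a0+1) _ (fun x hx => hz x (by simp [hx])) e he2
      · simp [rest_cons_neg h] at he

lemma routeOf_blue {b0 : Fin p} {ks : List ℕ} (hz : ∀ m ∈ ks, m = 0) :
    ∀ e ∈ routeOf (c := c) b0 ks, Hcol c p e = Col.blue := by
  intro e he
  rcases List.mem_cons.1 he with rfl | he2
  · rfl
  · exact mem_rest_blue ks 0 b0 hz e he2

lemma rest_has_red : ∀ (ks : List ℕ) (a0 : ℕ) (b : Fin p), (∃ m ∈ ks, m ≠ 0) →
    a0 + ks.length ≤ c → ∃ e ∈ rest (c := c) a0 b ks, Hcol c p e = Col.red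
  | [], _, _, hm, _ => by simp at hm
  | m :: ms, a0, b, hm, hlen => by
      have h : a0 < c := by simp at hlen; omega
      by_cases hm0 : m = 0
      · obtain ⟨m', hm', hne⟩ := hm
        have hm'' : m' ∈ ms := by
          rcases List.mem_cons.1 hm' with rfl | h2
          · omega
          · exact h2
        obtain ⟨e, he, hcol⟩ := rest_has_red ms (a0+1) (finNext^[m] b) ⟨m', hm'', hne⟩
          (by simp at hlen ⊢; omega)
        exact ⟨e, (rest_suffix_step h b m ms).subset he, hcol⟩
      · refine ⟨Sum.inr (⟨a0, h⟩, b), ?_, rfl⟩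
        rw [rest_cons h]
        apply List.mem_append_left
        obtain ⟨m'', rfl⟩ : ∃ m'', m = m'' + 1 := ⟨m - 1, by omega⟩
        rw [show rr (⟨a0, h⟩ : Fin c) b (m''+1)
              = Sum.inr (⟨a0, h⟩, b) :: rr ⟨a0, h⟩ (finNext b) m'' from rfl]
        simp

lemma blue_exceptional {w : List (HEdg c p)} (hw : IsSrcSnkWalk (Htl c p) (Hhd c p) w)
    (hblue : ∀ e ∈ w, Hcol c p e = Col.blue) :
    Exceptional (Htl c p) (Hhd c p) (Hcol c p) w := by
  refine ⟨Or.inr hw, ?_⟩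
  intro w' _ hinc
  obtain ⟨_, _, P, S, Q, P', Q', pe, qe, pe', qe', hdec, hhd, hbp, hbq', hrq, hrp'⟩ := hinc
  rcases hdec with ⟨h1, _⟩ | ⟨_, h1⟩
  · have : qe ∈ w := by rw [h1]; simp
    rw [hblue qe this] at hrq
    exact Col.noConfusion hrq
  · have : pe' ∈ w := by rw [h1]; simp
    rw [hblue pe' this] at hrp'
    exact Col.noConfusion hrp'

lemma rest_zeros_one : ∀ (j a0 : ℕ) (b : Fin p) (zs : List ℕ) (hlt : a0 + j < c),
    ∃ Pr : List (HEdg c p), rest a0 b (List.replicate j 0 ++ 1 :: zs)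
      = Pr ++ Sum.inr ((⟨a0 + j, by omega⟩ : Fin c), b)
          :: Sum.inl ((⟨a0 + j + 1, by omega⟩ : Fin (c+1)), finNext b)
          :: rest (a0 + j + 1) (finNext b) zs
  | 0, a0, b, zs, hlt => by
      refine ⟨[], ?_⟩
      rw [List.replicate_zero, List.nil_append, rest_cons (by omega)]
      rfl
  | j+1, a0, b, zs, hlt => by
      obtain ⟨Pr, hPr⟩ := rest_zeros_one j (a0+1) b zs (by omega)
      refine ⟨Sum.inl ((⟨a0+1, by omega⟩ : Fin (c+1)), b) :: Pr, ?_⟩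
      rw [List.replicate_succ, List.cons_append, rest_cons (by omega)]
      rw [show rr (⟨a0, by omega⟩ : Fin c) b 0 = [] from rfl, List.nil_append]
      show Sum.inl ((⟨a0+1, by omega⟩ : Fin (c+1)), b)
          :: rest (a0+1) b (List.replicate j 0 ++ 1 :: zs) = _
      rw [hPr]
      simp only [show a0 + 1 + j = a0 + (j + 1) from by omega, List.cons_append]

lemma srcsnk_head_blue (hc : 1 ≤ c) {w : List (HEdg c p)}
    (hw : IsSrcSnkWalk (Htl c p) (Hhd c p) w) :
    ∃ (b0 : Fin p) (t : List (HEdg c p)),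
      w = Sum.inl ((⟨0, Nat.succ_pos c⟩ : Fin (c+1)), b0) :: t := by
  obtain ⟨b0, ks, _, hkr⟩ := srcsnk_decode hc hw
  exact ⟨b0, rest 0 b0 ks, hkr⟩

lemma red_not_exceptional (hc : 1 ≤ c) (hp : 2 ≤ p) {w : List (HEdg c p)}
    (hw : IsSrcSnkWalk (Htl c p) (Hhd c p) w)
    (hred : ∃ e ∈ w, Hcol c p e = Col.red) :
    ¬ Exceptional (Htl c p) (Hhd c p) (Hcol c p) w := by
  intro hexc
  classical
  -- split w at the first red edge
  set bluP : HEdg c p → Bool := fun e => decide (Hcol c p e = Col.blue) with hbluP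
  have hTD : w.takeWhile bluP ++ w.dropWhile bluP = w := List.takeWhile_append_dropWhile ..
  have hDne : w.dropWhile bluP ≠ [] := by
    intro hnil
    obtain ⟨e, he, hecol⟩ := hred
    have := List.dropWhile_eq_nil_iff.1 hnil e he
    rw [hbluP] at this
    simp only [decide_eq_true_eq] at this
    rw [this] at hecol
    exact Col.noConfusion hecol
  obtain ⟨qe, Q, hDQ⟩ := List.exists_cons_of_ne_nil hDne
  have hqe_red : Hcol c p qe = Col.red := by
    have h9 := List.head?_dropWhile_not bluP w
    rw [hDQ] at h9
    simp only [List.head?_cons] at h9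
    rw [hbluP] at h9
    simp only [decide_eq_false_iff_not] at h9
    cases hcq : Hcol c p qe
    · rfl
    · exact absurd hcq h9
  have hTne : w.takeWhile bluP ≠ [] := by
    intro hnil
    obtain ⟨b0, t, hw0⟩ := srcsnk_head_blue hc hw
    rw [hnil, List.nil_append, hDQ] at hTD
    rw [hw0] at hTD
    have : qe = Sum.inl ((⟨0, Nat.succ_pos c⟩ : Fin (c+1)), b0) := (List.cons_eq_cons.1 hTD).1
    rw [this] at hqe_red
    exact Col.noConfusion hqe_red
  obtain ⟨P, pe, hTP⟩ := (List.eq_nil_or_concat (w.takeWhile bluP)).resolve_left hTne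
  rw [List.concat_eq_append] at hTP
  have hpe_blue : Hcol c p pe = Col.blue := by
    have : pe ∈ w.takeWhile bluP := by rw [hTP]; simp
    have := List.mem_takeWhile_imp this
    rw [hbluP] at this
    simpa using this
  have hwdec : w = (P ++ [pe]) ++ qe :: Q := by rw [← hTD, hTP, hDQ]
  have hR : ER c p pe qe := by
    have hch := hw.1.2
    rw [hwdec] at hch
    exact (List.isChain_append.1 hch).2.2 pe (by rw [List.getLast?_concat]; rfl) qe (by simp)
  -- qe is a red edge, hence of the form inr (a, x)
  obtain ⟨a, x, hqe⟩ : ∃ (a : Fin c) (x : Fin p), qe = Sum.inr (a, x) := by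
    match qe, hqe_red with
    | Sum.inr (a, x), _ => exact ⟨a, x, rfl⟩
  obtain ⟨xprev, hxprev⟩ := finNext_pred x
  -- the witness route
  set ks' : List ℕ := List.replicate a.1 0 ++ 1 :: List.replicate (c - a.1 - 1) 0 with hks'
  have hlen' : ks'.length = c := by
    rw [hks']
    simp only [List.length_append, List.length_replicate, List.length_cons]
    have := a.2
    omega
  have hw' : IsSrcSnkWalk (Htl c p) (Hhd c p) (routeOf xprev ks') := routeOf_walk hc hlen'
  obtain ⟨Pr, hPr⟩ := rest_zeros_one (c := c) a.1 0 xprev (List.replicate (c - a.1 - 1) 0)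
    (by have := a.2; omega)
  simp only [Nat.zero_add] at hPr
  set pe' : HEdg c p := Sum.inr ((⟨a.1, a.2⟩ : Fin c), xprev) with hpe'
  set qe' : HEdg c p := Sum.inl ((⟨a.1 + 1, by have := a.2; omega⟩ : Fin (c+1)), finNext xprev)
    with hqe'
  have hw'dec : routeOf xprev ks'
      = (Sum.inl ((⟨0, Nat.succ_pos c⟩ : Fin (c+1)), xprev) :: Pr)
        ++ pe' :: ([] ++ qe' :: rest (a.1 + 1) (finNext xprev) (List.replicate (c - a.1 - 1) 0)) := by
    rw [routeOf, hPr, hpe', hqe']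
    simp
  have hhd : Hhd c p pe = Hhd c p pe' := by
    have h1 : Hhd c p pe = Htl c p qe := hR
    rw [h1, hqe, Htl_inr, hpe', Hhd_inr, hxprev]
  apply hexc.2 (routeOf xprev ks') (Or.inr hw')
  refine ⟨hw, hw', P, [], Q, Sum.inl ((⟨0, Nat.succ_pos c⟩ : Fin (c+1)), xprev) :: Pr,
    rest (a.1 + 1) (finNext xprev) (List.replicate (c - a.1 - 1) 0), pe, qe, pe', qe',
    Or.inl ⟨by rw [hwdec]; simp, hw'dec⟩, hhd, hpe_blue, rfl, hqe_red, rfl⟩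

/-- The edge set of the row cycle in row `a+1`. -/
def rowSet (a : Fin c) (p : ℕ) : Finset (HEdg c p) :=
  Finset.univ.image (fun b : Fin p => Sum.inr (a, b))

lemma rr_toFinset (a : Fin c) (b : Fin p) : (rr a b p).toFinset = rowSet a p := by
  ext e
  rw [List.mem_toFinset, rr_eq_map, List.mem_map]
  simp only [List.mem_range]
  constructor
  · rintro ⟨i, hi, rfl⟩
    exact Finset.mem_image.2 ⟨finNext^[i] b, Finset.mem_univ _, rfl⟩
  · intro he
    obtain ⟨x, _, rfl⟩ := Finset.mem_image.1 he
    have hinj : Function.Injective (fun i : Fin p => finNext^[i.1] b) :=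
      fun i j hij => Fin.ext (finNext_iter_inj i.2 j.2 hij)
    obtain ⟨i, hi⟩ := Finite.injective_iff_surjective.1 hinj x
    exact ⟨i.1, i.2, by simp only at hi; rw [hi]⟩

lemma cycleSet_iff (hp : 2 ≤ p) (C : Finset (HEdg c p)) :
    IsCycleSet (Htl c p) (Hhd c p) C ↔ ∃ a : Fin c, C = rowSet a p := by
  constructor
  · rintro ⟨w, hmc, htf⟩
    obtain ⟨a, b, rfl⟩ := mincycle_struct hp hmc
    exact ⟨a, by rw [← htf, rr_toFinset]⟩
  · rintro ⟨a, rfl⟩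
    exact ⟨rr a ⟨0, by omega⟩ p, rr_isMinCycle hp _ _, rr_toFinset _ _⟩

lemma rowSet_inj (hp : 2 ≤ p) : Function.Injective (fun a : Fin c => rowSet a p) := by
  intro a a' h
  simp only at h
  have hb0 : Sum.inr (a, (⟨0, by omega⟩ : Fin p)) ∈ rowSet a p :=
    Finset.mem_image.2 ⟨_, Finset.mem_univ _, rfl⟩
  rw [h] at hb0
  obtain ⟨b, _, heq⟩ := Finset.mem_image.1 hb0
  have h' := Sum.inr.inj heq
  exact ((Prod.ext_iff.1 h').1).symm

lemma rr_head_inj (a : Fin c) : ∀ (m m' : ℕ) (b : Fin p) (u u' : Fin (c+1) × Fin p)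
    (l l' : List (HEdg c p)),
    rr a b m ++ Sum.inl u :: l = rr a b m' ++ Sum.inl u' :: l' → m = m'
  | 0, 0, _, _, _, _, _, _ => rfl
  | 0, m'+1, b, u, u', l, l', h => by
      rw [show rr a b 0 = [] from rfl, List.nil_append,
        show rr a b (m'+1) = Sum.inr (a, b) :: rr a (finNext b) m' from rfl,
        List.cons_append] at h
      exact absurd (List.cons_eq_cons.1 h).1 (by simp)
  | m+1, 0, b, u, u', l, l', h => by
      rw [show rr a b 0 = [] from rfl, List.nil_append,
        show rr a b (m+1) = Sum.inr (a, b) :: rr a (finNext b) m from rfl,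
        List.cons_append] at h
      exact absurd (List.cons_eq_cons.1 h).1 (by simp)
  | m+1, m'+1, b, u, u', l, l', h => by
      rw [show rr a b (m+1) = Sum.inr (a, b) :: rr a (finNext b) m from rfl,
        show rr a b (m'+1) = Sum.inr (a, b) :: rr a (finNext b) m' from rfl,
        List.cons_append, List.cons_append] at h
      have := rr_head_inj a m m' (finNext b) u u' l l' (List.cons_eq_cons.1 h).2
      omega

lemma rest_inj : ∀ (ks ks' : List ℕ) (a0 : ℕ) (b : Fin p), ks.length = ks'.length →
    a0 + ks.length ≤ c → rest (c := c) a0 b ks = rest (c := c) a0 b ks' → ks = ks'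
  | [], [], _, _, _, _, _ => rfl
  | [], _ :: _, _, _, hlen, _, _ => by simp at hlen
  | _ :: _, [], _, _, hlen, _, _ => by simp at hlen
  | m :: ms, m' :: ms', a0, b, hlen, hc', heq => by
      have h : a0 < c := by simp at hc'; omega
      rw [rest_cons h, rest_cons h] at heq
      have hm : m = m' := rr_head_inj _ m m' b _ _ _ _ heq
      subst hm
      have heq2 := List.append_cancel_left heq
      have heq3 := (List.cons_eq_cons.1 heq2).2
      have := rest_inj ms ms' (a0+1) (finNext^[m] b) (by simpa using hlen)
        (by simp at hc' ⊢; omega) heq3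
      rw [this]

lemma routeOf_inj {b0 b0' : Fin p} {ks ks' : List ℕ} (hl : ks.length = ks'.length)
    (hc' : ks.length = c) (h : routeOf (c := c) b0 ks = routeOf b0' ks') :
    b0 = b0' ∧ ks = ks' := by
  rw [routeOf, routeOf] at h
  obtain ⟨h1, h2⟩ := List.cons_eq_cons.1 h
  have hb : b0 = b0' := (Prod.ext_iff.1 (Sum.inl.inj h1)).2
  subst hb
  exact ⟨rfl, rest_inj ks ks' 0 b0 hl (by omega) h2⟩

end Aux

/-- `H_{c,p}` has exactly `p^(c+1)` good routes, exactly `p` of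
which are exceptional (namely the monochromatic blue source-to-sink routes);
hence `p^(c+1) − p` good non-exceptional routes.  It has `c` minimal directed
cycles (counted up to rotation, i.e. as edge sets), for a total of `c + p`
exceptional routes. -/
theorem statement12 (c p : ℕ) (hc : 1 ≤ c) (hp : 2 ≤ p) :
    {w : List (HEdg c p) | IsGoodRoute (Htl c p) (Hhd c p) w}.ncard = p ^ (c + 1) ∧
    {w : List (HEdg c p) | IsGoodRoute (Htl c p) (Hhd c p) w ∧
        Exceptional (Htl c p) (Hhd c p) (Hcol c p) w}.ncard = p ∧
    {w : List (HEdg c p) | IsGoodRoute (Htl c p) (Hhd c p) w ∧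
        ¬ Exceptional (Htl c p) (Hhd c p) (Hcol c p) w}.ncard = p ^ (c + 1) - p ∧
    {C : Finset (HEdg c p) | IsCycleSet (Htl c p) (Hhd c p) C}.ncard = c ∧
    {w : List (HEdg c p) | IsGoodRoute (Htl c p) (Hhd c p) w ∧
        Exceptional (Htl c p) (Hhd c p) (Hcol c p) w}.ncard +
      {C : Finset (HEdg c p) | IsCycleSet (Htl c p) (Hhd c p) C}.ncard = c + p ∧
    {w : List (HEdg c p) | IsGoodRoute (Htl c p) (Hhd c p) w ∧
        Exceptional (Htl c p) (Hhd c p) (Hcol c p) w} =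
      {w : List (HEdg c p) | IsGoodRoute (Htl c p) (Hhd c p) w ∧
        ∀ e ∈ w, Hcol c p e = Col.blue} := by
  classical
  set F : Fin p × (Fin c → Fin p) → List (HEdg c p) :=
    fun x => routeOf x.1 ((List.ofFn x.2).map Fin.val) with hF
  have hFlen : ∀ x : Fin p × (Fin c → Fin p), ((List.ofFn x.2).map Fin.val).length = c := by
    intro x
    simp
  have hFlt : ∀ (x : Fin p × (Fin c → Fin p)) (m : ℕ), m ∈ (List.ofFn x.2).map Fin.val → m < p := by
    intro x m hm
    obtain ⟨y, _, rfl⟩ := List.mem_map.1 hm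
    exact y.2
  have hgood_eq : {w : List (HEdg c p) | IsGoodRoute (Htl c p) (Hhd c p) w} = Set.range F := by
    ext w
    simp only [Set.mem_setOf_eq, Set.mem_range]
    constructor
    · intro hw
      obtain ⟨b0, ks, hkl, hlt, rfl⟩ := good_decode hc hp hw
      refine ⟨(b0, fun i => (⟨ks[i.1]'(by rw [hkl]; exact i.2),
        hlt _ (List.getElem_mem _)⟩ : Fin p)), ?_⟩
      rw [hF]
      show routeOf b0 _ = routeOf b0 ks
      congr 1
      apply List.ext_getElem
      · simp [hkl]
      · intro i h1 h2
        simp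
    · rintro ⟨x, rfl⟩
      exact routeOf_good hc hp (hFlen x) (hFlt x)
  have hFinj : Function.Injective F := by
    intro x y h
    rw [hF] at h
    obtain ⟨hb, hk⟩ := routeOf_inj (by simp) (by simp) h
    have h2 : List.ofFn x.2 = List.ofFn y.2 :=
      (List.map_injective_iff.2 Fin.val_injective) hk
    exact Prod.ext hb (List.ofFn_injective h2)
  have hgood_card : {w : List (HEdg c p) | IsGoodRoute (Htl c p) (Hhd c p) w}.ncard
      = p ^ (c + 1) := by
    rw [hgood_eq, ← Set.image_univ, Set.ncard_image_of_injective _ hFinj, Set.ncard_univ,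
      Nat.card_eq_fintype_card, Fintype.card_prod, Fintype.card_fun, Fintype.card_fin,
      Fintype.card_fin, pow_succ, mul_comm]
  -- the exceptional good routes
  set G : Fin p → List (HEdg c p) := fun b0 => routeOf b0 (List.replicate c 0) with hG
  have hrep_len : (List.replicate c (0:ℕ)).length = c := by simp
  have hGgood : ∀ b0, IsGoodRoute (Htl c p) (Hhd c p) (G b0) := fun b0 =>
    routeOf_good hc hp hrep_len (fun m hm => by rw [List.eq_of_mem_replicate hm]; omega)
  have hGblue : ∀ b0, ∀ e ∈ G b0, Hcol c p e = Col.blue := fun b0 =>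
    routeOf_blue (fun m hm => List.eq_of_mem_replicate hm)
  have hexc_eq_blue : {w : List (HEdg c p) | IsGoodRoute (Htl c p) (Hhd c p) w ∧
        Exceptional (Htl c p) (Hhd c p) (Hcol c p) w} =
      {w : List (HEdg c p) | IsGoodRoute (Htl c p) (Hhd c p) w ∧
        ∀ e ∈ w, Hcol c p e = Col.blue} := by
    ext w
    simp only [Set.mem_setOf_eq]
    constructor
    · rintro ⟨hgw, hexcw⟩
      refine ⟨hgw, ?_⟩
      by_contra hnb
      push_neg at hnb
      obtain ⟨e, he, hne⟩ := hnb
      have hered : Hcol c p e = Col.red := by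
        cases h : Hcol c p e
        · rfl
        · exact absurd h hne
      exact red_not_exceptional hc hp hgw.1 ⟨e, he, hered⟩ hexcw
    · rintro ⟨hgw, hblue⟩
      exact ⟨hgw, blue_exceptional hgw.1 hblue⟩
  have hblue_eq_range : {w : List (HEdg c p) | IsGoodRoute (Htl c p) (Hhd c p) w ∧
        ∀ e ∈ w, Hcol c p e = Col.blue} = Set.range G := by
    ext w
    simp only [Set.mem_setOf_eq, Set.mem_range]
    constructor
    · rintro ⟨hgw, hblue⟩
      obtain ⟨b0, ks, hkl, hlt, rfl⟩ := good_decode hc hp hgw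
      have hz : ∀ m ∈ ks, m = 0 := by
        by_contra hnz
        push_neg at hnz
        obtain ⟨e, he, hcol⟩ := rest_has_red ks 0 b0 hnz (show (0:ℕ) + ks.length ≤ c by omega)
        have hb := hblue e (List.mem_cons_of_mem _ he)
        rw [hb] at hcol
        exact Col.noConfusion hcol
      have hrep : ks = List.replicate c 0 := List.eq_replicate_iff.2 ⟨hkl, hz⟩
      exact ⟨b0, by rw [hG]; rw [← hrep]⟩
    · rintro ⟨b0, rfl⟩
      exact ⟨hGgood b0, hGblue b0⟩
  have hGinj : Function.Injective G := by
    intro b0 b0' h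
    rw [hG] at h
    exact (routeOf_inj rfl hrep_len h).1
  have hexc_card : {w : List (HEdg c p) | IsGoodRoute (Htl c p) (Hhd c p) w ∧
        Exceptional (Htl c p) (Hhd c p) (Hcol c p) w}.ncard = p := by
    rw [hexc_eq_blue, hblue_eq_range, ← Set.image_univ, Set.ncard_image_of_injective _ hGinj,
      Set.ncard_univ, Nat.card_eq_fintype_card, Fintype.card_fin]
  -- cycle sets
  have hcyc_eq : {C : Finset (HEdg c p) | IsCycleSet (Htl c p) (Hhd c p) C}
      = Set.range (fun a : Fin c => rowSet a p) := by
    ext C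
    simp only [Set.mem_setOf_eq, Set.mem_range]
    rw [cycleSet_iff hp]
    constructor
    · rintro ⟨a, rfl⟩
      exact ⟨a, rfl⟩
    · rintro ⟨a, rfl⟩
      exact ⟨a, rfl⟩
  have hcyc_card : {C : Finset (HEdg c p) | IsCycleSet (Htl c p) (Hhd c p) C}.ncard = c := by
    rw [hcyc_eq, ← Set.image_univ, Set.ncard_image_of_injective _ (rowSet_inj hp),
      Set.ncard_univ, Nat.card_eq_fintype_card, Fintype.card_fin]
  -- non-exceptional good routes
  have hnonexc_card : {w : List (HEdg c p) | IsGoodRoute (Htl c p) (Hhd c p) w ∧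
        ¬ Exceptional (Htl c p) (Hhd c p) (Hcol c p) w}.ncard = p ^ (c + 1) - p := by
    have hdiff : {w : List (HEdg c p) | IsGoodRoute (Htl c p) (Hhd c p) w ∧
          ¬ Exceptional (Htl c p) (Hhd c p) (Hcol c p) w}
        = {w : List (HEdg c p) | IsGoodRoute (Htl c p) (Hhd c p) w} \
          {w : List (HEdg c p) | IsGoodRoute (Htl c p) (Hhd c p) w ∧
            Exceptional (Htl c p) (Hhd c p) (Hcol c p) w} := by
      ext w
      simp only [Set.mem_setOf_eq, Set.mem_diff]
      tauto
    have hsub : {w : List (HEdg c p) | IsGoodRoute (Htl c p) (Hhd c p) w ∧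
          Exceptional (Htl c p) (Hhd c p) (Hcol c p) w}
        ⊆ {w : List (HEdg c p) | IsGoodRoute (Htl c p) (Hhd c p) w} := fun w hw => hw.1
    have hfin : {w : List (HEdg c p) | IsGoodRoute (Htl c p) (Hhd c p) w ∧
          Exceptional (Htl c p) (Hhd c p) (Hcol c p) w}.Finite := by
      rw [hexc_eq_blue, hblue_eq_range]
      exact Set.finite_range G
    rw [hdiff, Set.ncard_diff hsub hfin, hgood_card, hexc_card]
  exact ⟨hgood_card, hexc_card, hnonexc_card, hcyc_card,
    by rw [hexc_card, hcyc_card]; omega, hexc_eq_blue⟩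


end PaperDKK
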